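/- Let Φ be a random s × d matrix whose entries are independent and identically distributed with ℙ(Φ_{ij} = 1) = ℙ(Φ_{ij} = −1) = p and ℙ(Φ_{ij} = 0) = 1 − 2p, where 0 < p ≤ 1/2. Set α = 2sp, r = d/s, and r' = r + 1 + 1/α. Then for every x ∈ ℝ^d, E‖(1/(αr'))·ΦᵀΦx − x‖₂² ≤ (1 − 1/r')·‖x‖₂². In other words, the random linear map F(x) = (1/(α(r+1+1/α)))·ΦᵀΦx is a compression operator with compression coefficient δ = 1/(r + 1 + 1/α). -/

import Mathlib

/-!
Random Linear Compressor (RLC): if `Φ` is a random `s × d` matrix with i.i.d. entries `+1`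
w.p. `p`, `-1` w.p. `p`, `0` w.p. `1 - 2p`, and `α = 2sp`, `r = d/s`, `r' = r + 1 + 1/α`, then
the map `F(x) = (1/(αr'))·ΦᵀΦx` is a compression operator with coefficient `δ = 1/r'`:
for every `x ∈ ℝ^d`, `E‖F(x) − x‖₂² ≤ (1 − 1/r')·‖x‖₂²`.
-/

open MeasureTheory ProbabilityTheory Matrix

/-- The law of a single entry of the compression matrix: `+1` w.p. `p`, `-1` w.p. `p`,
`0` w.p. `1 - 2p`. -/
noncomputable def entryLaw (p : ℝ) : Measure ℝ :=
  ENNReal.ofReal p • Measure.dirac 1 + ENNReal.ofReal p • Measure.dirac (-1) +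
    ENNReal.ofReal (1 - 2 * p) • Measure.dirac 0

lemma integrable_dirac'' {f : ℝ → ℝ} (hf : Measurable f) (a : ℝ) :
    Integrable f (Measure.dirac a) := by
  refine ⟨hf.aestronglyMeasurable, ?_⟩
  rw [HasFiniteIntegral, lintegral_dirac]
  exact ENNReal.coe_lt_top

lemma entryLaw_integral (p : ℝ) {f : ℝ → ℝ} (hf : Measurable f) :
    ∫ t, f t ∂(entryLaw p) =
      ENNReal.toReal (ENNReal.ofReal p) * f 1 + ENNReal.toReal (ENNReal.ofReal p) * f (-1)
        + ENNReal.toReal (ENNReal.ofReal (1 - 2 * p)) * f 0 := by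
  unfold entryLaw
  have h1 : Integrable f (ENNReal.ofReal p • Measure.dirac (1:ℝ)) :=
    (integrable_dirac'' hf _).smul_measure ENNReal.ofReal_lt_top.ne
  have h2 : Integrable f (ENNReal.ofReal p • Measure.dirac (-1:ℝ)) :=
    (integrable_dirac'' hf _).smul_measure ENNReal.ofReal_lt_top.ne
  have h3 : Integrable f (ENNReal.ofReal (1 - 2*p) • Measure.dirac (0:ℝ)) :=
    (integrable_dirac'' hf _).smul_measure ENNReal.ofReal_lt_top.ne
  rw [integral_add_measure (h1.add_measure h2) h3, integral_add_measure h1 h2,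
    integral_smul_measure, integral_smul_measure, integral_smul_measure,
    integral_dirac, integral_dirac, integral_dirac]
  simp [smul_eq_mul]

lemma entryLaw_integral' {p : ℝ} (hp : 0 ≤ p) (hp2 : p ≤ 1/2) {f : ℝ → ℝ} (hf : Measurable f) :
    ∫ t, f t ∂(entryLaw p) = p * f 1 + p * f (-1) + (1 - 2 * p) * f 0 := by
  rw [entryLaw_integral p hf, ENNReal.toReal_ofReal hp, ENNReal.toReal_ofReal (by linarith)]

theorem random_linear_compressor
    {Ω : Type*} [MeasurableSpace Ω] (μ : Measure Ω) [IsProbabilityMeasure μ]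
    (s d : ℕ) (hs : 0 < s) (hd : 0 < d) (p : ℝ) (hp : 0 < p) (hp2 : p ≤ 1 / 2)
    (Φ : Ω → Matrix (Fin s) (Fin d) ℝ)
    (hmeas : ∀ i j, Measurable fun ω => Φ ω i j)
    (hindep : iIndepFun
      (fun (ij : Fin s × Fin d) ω => Φ ω ij.1 ij.2) μ)
    (hlaw : ∀ i j, Measure.map (fun ω => Φ ω i j) μ = entryLaw p)
    (α r r' : ℝ) (hα : α = 2 * s * p) (hr : r = (d : ℝ) / s) (hr' : r' = r + 1 + 1 / α) :
    ∀ x : Fin d → ℝ,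
      ∫ ω, ∑ a, (((1 / (α * r')) • ((Φ ω)ᵀ *ᵥ (Φ ω *ᵥ x))) a - x a) ^ 2 ∂μ ≤
        (1 - 1 / r') * ∑ a, x a ^ 2 := by
  intro x
  have hs' : (0:ℝ) < (s:ℝ) := by exact_mod_cast hs
  have hα0 : 0 < α := by rw [hα]; positivity
  have hr'0 : 0 < r' := by
    rw [hr', hr]
    have : 0 ≤ (d:ℝ)/(s:ℝ) := by positivity
    have : 0 < 1/α := by positivity
    linarith
  -- a.e. boundedness of entries
  have hbd : ∀ᵐ ω ∂μ, ∀ i j, |Φ ω i j| ≤ 1 := by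
    rw [ae_all_iff]
    intro i
    rw [ae_all_iff]
    intro j
    have hA : MeasurableSet ({-1,0,1} : Set ℝ) := by
      measurability
    have h0 : μ ((fun ω => Φ ω i j) ⁻¹' ({-1,0,1} : Set ℝ)ᶜ) = 0 := by
      rw [← Measure.map_apply (hmeas i j) hA.compl, hlaw i j]
      simp [entryLaw, Measure.dirac_apply' _ hA.compl, Set.indicator_apply]
    have hmem : ∀ᵐ ω ∂μ, Φ ω i j ∈ ({-1,0,1} : Set ℝ) := by
      rw [ae_iff]
      convert h0 using 2
      rfl
    filter_upwards [hmem] with ω hω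
    rcases hω with h | h | h <;> rw [h] <;> norm_num
  -- master integrability lemma
  have hIbd : ∀ (g : Ω → ℝ), Measurable g → (∀ ω, (∀ i j, |Φ ω i j| ≤ 1) → |g ω| ≤ 1) →
      Integrable g μ := by
    intro g hg hgb
    refine Integrable.mono' (integrable_const 1) hg.aestronglyMeasurable ?_
    filter_upwards [hbd] with ω hω
    rw [Real.norm_eq_abs]
    exact hgb ω hω
  -- moments of a single entry
  have hmomn : ∀ (i : Fin s) (j : Fin d) (n : ℕ),
      ∫ ω, (Φ ω i j)^n ∂μ = p * 1^n + p * (-1:ℝ)^n + (1-2*p) * 0^n := by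
    intro i j n
    have hmb : Measurable fun t : ℝ => t ^ n := measurable_id.pow_const n
    rw [← integral_map (hmeas i j).aemeasurable hmb.aestronglyMeasurable, hlaw i j,
      entryLaw_integral' hp.le hp2 hmb]
  have hmom1 : ∀ (i : Fin s) (j : Fin d), ∫ ω, Φ ω i j ∂μ = 0 := by
    intro i j
    have := hmomn i j 1
    simpa using this
  have hmom2 : ∀ (i : Fin s) (j : Fin d), ∫ ω, (Φ ω i j)^2 ∂μ = 2*p := by
    intro i j
    have := hmomn i j 2
    rw [this]; norm_num; ring
  have hmom3 : ∀ (i : Fin s) (j : Fin d), ∫ ω, (Φ ω i j)^3 ∂μ = 0 := by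
    intro i j
    have := hmomn i j 3
    rw [this]; norm_num
  have hmom4 : ∀ (i : Fin s) (j : Fin d), ∫ ω, (Φ ω i j)^4 ∂μ = 2*p := by
    intro i j
    have := hmomn i j 4
    rw [this]; norm_num; ring
  -- independence-based product moments
  have hmeas' : ∀ q : Fin s × Fin d, Measurable ((fun ij ω => Φ ω ij.1 ij.2) q) :=
    fun q => hmeas q.1 q.2
  have hprodpow : ∀ (q q' : Fin s × Fin d), q ≠ q' → ∀ m n : ℕ,
      ∫ ω, (Φ ω q.1 q.2)^m * (Φ ω q'.1 q'.2)^n ∂μ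
        = (∫ ω, (Φ ω q.1 q.2)^m ∂μ) * ∫ ω, (Φ ω q'.1 q'.2)^n ∂μ := by
    intro q q' hqq' m n
    have h := (hindep.indepFun hqq').comp (measurable_id.pow_const m)
      (measurable_id.pow_const n)
    exact h.integral_fun_mul_eq_mul_integral ((hmeas _ _).pow_const m).aestronglyMeasurable
      ((hmeas _ _).pow_const n).aestronglyMeasurable
  -- pairwise moment
  have hatom2 : ∀ (i i' : Fin s) (a b : Fin d),
      ∫ ω, Φ ω i a * Φ ω i' b ∂μ = if i = i' ∧ a = b then 2*p else 0 := by
    intro i i' a b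
    by_cases h : ((i,a) : Fin s × Fin d) = (i',b)
    · obtain ⟨h1, h2⟩ := Prod.mk.injEq .. ▸ h
      subst h1; subst h2
      rw [if_pos ⟨rfl, rfl⟩]
      have : (fun ω => Φ ω i a * Φ ω i a) = fun ω => (Φ ω i a)^2 := by
        funext ω; ring
      rw [this, hmom2]
    · rw [if_neg (by simpa [Prod.ext_iff] using h)]
      have h2 := hprodpow (i,a) (i',b) h 1 1
      simp only [pow_one] at h2
      rw [h2, hmom1, hmom1, mul_zero]
  -- triple moment
  have htriple : ∀ (q1 q2 q3 : Fin s × Fin d), q1 ≠ q3 → q2 ≠ q3 →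
      ∫ ω, (Φ ω q1.1 q1.2 * Φ ω q2.1 q2.2) * (Φ ω q3.1 q3.2)^2 ∂μ
        = (∫ ω, Φ ω q1.1 q1.2 * Φ ω q2.1 q2.2 ∂μ) * ∫ ω, (Φ ω q3.1 q3.2)^2 ∂μ := by
    intro q1 q2 q3 h13 h23
    have h := (hindep.indepFun_prodMk hmeas' q1 q2 q3 h13 h23).comp
        (measurable_fst.mul measurable_snd) (measurable_id.pow_const 2)
    exact h.integral_fun_mul_eq_mul_integral ((hmeas _ _).mul (hmeas _ _)).aestronglyMeasurable
      ((hmeas _ _).pow_const 2).aestronglyMeasurable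
  -- quadruple moment
  have hquad : ∀ (q1 q2 q3 q4 : Fin s × Fin d), q1 ≠ q3 → q1 ≠ q4 → q2 ≠ q3 → q2 ≠ q4 →
      ∫ ω, (Φ ω q1.1 q1.2 * Φ ω q2.1 q2.2) * (Φ ω q3.1 q3.2 * Φ ω q4.1 q4.2) ∂μ
        = (∫ ω, Φ ω q1.1 q1.2 * Φ ω q2.1 q2.2 ∂μ)
          * ∫ ω, Φ ω q3.1 q3.2 * Φ ω q4.1 q4.2 ∂μ := by
    intro q1 q2 q3 q4 h13 h14 h23 h24
    have h := (hindep.indepFun_prodMk_prodMk hmeas' q1 q2 q3 q4 h13 h14 h23 h24).comp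
        (measurable_fst.mul measurable_snd) (measurable_fst.mul measurable_snd)
    exact h.integral_fun_mul_eq_mul_integral ((hmeas _ _).mul (hmeas _ _)).aestronglyMeasurable
      ((hmeas _ _).mul (hmeas _ _)).aestronglyMeasurable
  -- the fourth-order mixed moment, all cases
  have hatom4 : ∀ (a : Fin d) (i i' : Fin s) (b b' : Fin d),
      ∫ ω, Φ ω i a * Φ ω i b * (Φ ω i' a * Φ ω i' b') ∂μ =
        if i = i' then (if b = b' then (if a = b then 2*p else (2*p)*(2*p)) else 0)
        else (if a = b then 2*p else 0) * (if a = b' then 2*p else 0) := by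
    intro a i i' b b'
    by_cases hii : i = i'
    · subst hii
      rw [if_pos rfl]
      by_cases hbb : b = b'
      · subst hbb
        rw [if_pos rfl]
        by_cases hba : a = b
        · subst hba
          rw [if_pos rfl]
          have : (fun ω => Φ ω i a * Φ ω i a * (Φ ω i a * Φ ω i a))
              = fun ω => (Φ ω i a)^4 := by funext ω; ring
          rw [this, hmom4]
        · rw [if_neg hba]
          have hne : ((i,a) : Fin s × Fin d) ≠ (i,b) := by
            simp [Prod.ext_iff, hba]
          have : (fun ω => Φ ω i a * Φ ω i b * (Φ ω i a * Φ ω i b))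
              = fun ω => (Φ ω i a)^2 * (Φ ω i b)^2 := by funext ω; ring
          rw [this]
          have h2 := hprodpow (i,a) (i,b) hne 2 2
          rw [h2, hmom2, hmom2]
      · rw [if_neg hbb]
        by_cases hba : a = b
        · subst hba
          have hne : ((i,a) : Fin s × Fin d) ≠ (i,b') := by
            simp [Prod.ext_iff]; exact hbb
          have : (fun ω => Φ ω i a * Φ ω i a * (Φ ω i a * Φ ω i b'))
              = fun ω => (Φ ω i a)^3 * (Φ ω i b')^1 := by funext ω; ring
          rw [this, hprodpow (i,a) (i,b') hne 3 1, hmom3, zero_mul]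
        · by_cases hb'a : a = b'
          · subst hb'a
            have hne : ((i,a) : Fin s × Fin d) ≠ (i,b) := by
              simp [Prod.ext_iff, hba]
            have : (fun ω => Φ ω i a * Φ ω i b * (Φ ω i a * Φ ω i a))
                = fun ω => (Φ ω i a)^3 * (Φ ω i b)^1 := by funext ω; ring
            rw [this, hprodpow (i,a) (i,b) hne 3 1, hmom3, zero_mul]
          · -- a, b, b' pairwise distinct
            have hne1 : ((i,b) : Fin s × Fin d) ≠ (i,a) := by
              simp [Prod.ext_iff]; exact fun h => hba h.symm
            have hne2 : ((i,b') : Fin s × Fin d) ≠ (i,a) := by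
              simp [Prod.ext_iff]; exact fun h => hb'a h.symm
            have : (fun ω => Φ ω i a * Φ ω i b * (Φ ω i a * Φ ω i b'))
                = fun ω => (Φ ω i b * Φ ω i b') * (Φ ω i a)^2 := by funext ω; ring
            rw [this, htriple (i,b) (i,b') (i,a) hne1 hne2, hatom2]
            rw [if_neg (by simp; exact hbb)]
            rw [zero_mul]
    · rw [if_neg hii]
      have h13 : ((i,a) : Fin s × Fin d) ≠ (i',a) := by simp [Prod.ext_iff, hii]
      have h14 : ((i,a) : Fin s × Fin d) ≠ (i',b') := by simp [Prod.ext_iff, hii]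
      have h23 : ((i,b) : Fin s × Fin d) ≠ (i',a) := by simp [Prod.ext_iff, hii]
      have h24 : ((i,b) : Fin s × Fin d) ≠ (i',b') := by simp [Prod.ext_iff, hii]
      rw [hquad (i,a) (i,b) (i',a) (i',b') h13 h14 h23 h24, hatom2, hatom2]
      simp
  -- integrability of atoms
  have iAtom2 : ∀ (i i' : Fin s) (a b : Fin d), Integrable (fun ω => Φ ω i a * Φ ω i' b) μ := by
    intro i i' a b
    refine hIbd _ ((hmeas i a).mul (hmeas i' b)) fun ω hω => ?_
    rw [abs_mul]
    calc |Φ ω i a| * |Φ ω i' b| ≤ 1 * 1 :=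
          mul_le_mul (hω i a) (hω i' b) (abs_nonneg _) zero_le_one
      _ = 1 := mul_one 1
  have iAtom4 : ∀ (i i' : Fin s) (a b b' : Fin d),
      Integrable (fun ω => Φ ω i a * Φ ω i b * (Φ ω i' a * Φ ω i' b')) μ := by
    intro i i' a b b'
    refine hIbd _ (((hmeas i a).mul (hmeas i b)).mul ((hmeas i' a).mul (hmeas i' b')))
      fun ω hω => ?_
    rw [abs_mul, abs_mul, abs_mul]
    have h1 : |Φ ω i a| * |Φ ω i b| ≤ 1 :=
      mul_le_one₀ (hω i a) (abs_nonneg _) (hω i b)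
    have h2 : |Φ ω i' a| * |Φ ω i' b'| ≤ 1 :=
      mul_le_one₀ (hω i' a) (abs_nonneg _) (hω i' b')
    exact mul_le_one₀ h1 (mul_nonneg (abs_nonneg _) (abs_nonneg _)) h2
  -- pointwise expansion of the integrand
  have hpt : ∀ ω, ∀ a : Fin d, (((1 / (α * r')) • ((Φ ω)ᵀ *ᵥ (Φ ω *ᵥ x))) a - x a)^2
      = (1/(α*r'))^2 * (∑ i, ∑ i', ∑ b, ∑ b',
            x b * x b' * (Φ ω i a * Φ ω i b * (Φ ω i' a * Φ ω i' b')))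
          - 2*(1/(α*r'))*x a * (∑ i, ∑ b, x b * (Φ ω i a * Φ ω i b)) + x a^2 := by
    intro ω a
    have e1 : ((1 / (α * r')) • ((Φ ω)ᵀ *ᵥ (Φ ω *ᵥ x))) a
        = (1/(α*r')) * ∑ i, ∑ b, x b * (Φ ω i a * Φ ω i b) := by
      simp only [Pi.smul_apply, smul_eq_mul, mulVec, dotProduct, transpose_apply]
      congr 1
      refine Finset.sum_congr rfl fun i _ => ?_
      rw [Finset.mul_sum]
      exact Finset.sum_congr rfl fun b _ => by ring
    rw [e1]
    have e2 : (∑ i, ∑ b, x b * (Φ ω i a * Φ ω i b))^2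
        = ∑ i, ∑ i', ∑ b, ∑ b',
            x b * x b' * (Φ ω i a * Φ ω i b * (Φ ω i' a * Φ ω i' b')) := by
      rw [sq, Finset.sum_mul_sum]
      refine Finset.sum_congr rfl fun i _ => Finset.sum_congr rfl fun i' _ => ?_
      rw [Finset.sum_mul_sum]
      exact Finset.sum_congr rfl fun b _ => Finset.sum_congr rfl fun b' _ => by ring
    rw [← e2]; ring
  -- integral of the linear part
  have hLval : ∀ a : Fin d,
      ∫ ω, (∑ i, ∑ b, x b * (Φ ω i a * Φ ω i b)) ∂μ = (s:ℝ) * (2*p) * x a := by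
    intro a
    rw [integral_finset_sum _
      (fun i _ => integrable_finset_sum _ fun b _ => ((iAtom2 i i a b).const_mul _))]
    have h1 : ∀ i : Fin s, (∫ ω, ∑ b, x b * (Φ ω i a * Φ ω i b) ∂μ) = (2*p) * x a := by
      intro i
      rw [integral_finset_sum _ (fun b _ => (iAtom2 i i a b).const_mul _)]
      have h2 : ∀ b : Fin d, ∫ ω, x b * (Φ ω i a * Φ ω i b) ∂μ
          = x b * (if a = b then 2*p else 0) := by
        intro b; rw [integral_const_mul, hatom2]; simp
      rw [Finset.sum_congr rfl fun b _ => h2 b]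
      simp [mul_ite, mul_zero, Finset.sum_ite_eq]
      ring
    rw [Finset.sum_congr rfl fun i _ => h1 i, Finset.sum_const, Finset.card_univ,
      Fintype.card_fin, nsmul_eq_mul]
    ring
  have hS0 : (0:ℝ) ≤ ∑ b, x b ^ 2 := Finset.sum_nonneg fun b _ => sq_nonneg _
  -- inner double sums
  have hinner2 : ∀ a : Fin d, (∑ b, ∑ b', x b * x b' *
      ((if a = b then 2*p else 0) * (if a = b' then 2*p else 0)))
      = (2*p)*(2*p)*(x a)^2 := by
    intro a
    simp only [mul_ite, ite_mul, mul_zero, zero_mul, Finset.sum_ite_eq, Finset.mem_univ,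
      if_true]
    ring
  have hinner1 : ∀ a : Fin d, (∑ b, ∑ b', x b * x b' *
      (if b = b' then (if a = b then 2*p else (2*p)*(2*p)) else 0))
      = (2*p)*(2*p)*(∑ b, x b^2) + (2*p - (2*p)*(2*p)) * x a^2 := by
    intro a
    have step : ∀ b : Fin d, (∑ b', x b * x b' *
        (if b = b' then (if a = b then 2*p else (2*p)*(2*p)) else 0))
        = x b^2 * (if a = b then 2*p else (2*p)*(2*p)) := by
      intro b
      simp only [mul_ite, mul_zero, Finset.sum_ite_eq, Finset.mem_univ, if_true]
      ring
    rw [Finset.sum_congr rfl fun b _ => step b]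
    have step2 : ∀ b : Fin d, x b^2 * (if a = b then 2*p else (2*p)*(2*p))
        = (2*p)*(2*p)*x b^2 + (if a = b then (2*p - (2*p)*(2*p))*x b^2 else 0) := by
      intro b; split_ifs <;> ring
    rw [Finset.sum_congr rfl fun b _ => step2 b, Finset.sum_add_distrib, Finset.sum_ite_eq,
      ← Finset.mul_sum]
    simp
  have outer : ∀ (V1 V2 : ℝ), (∑ _i : Fin s, ∑ i' : Fin s,
      if _i = i' then V1 else V2) = (s:ℝ)*V1 + ((s:ℝ)^2 - s)*V2 := by
    intro V1 V2
    have step : ∀ i i' : Fin s, (if i = i' then V1 else V2)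
        = V2 + (if i = i' then V1 - V2 else 0) := by
      intro i i'; split_ifs <;> ring
    simp only [step, Finset.sum_add_distrib, Finset.sum_ite_eq, Finset.sum_const,
      Finset.card_univ, Fintype.card_fin, nsmul_eq_mul, Finset.mem_univ, if_true]
    ring
  -- integral of the quadratic part
  have hQval : ∀ a : Fin d, ∫ ω, (∑ i, ∑ i', ∑ b, ∑ b',
      x b * x b' * (Φ ω i a * Φ ω i b * (Φ ω i' a * Φ ω i' b'))) ∂μ
      = (s:ℝ)*((2*p)*(2*p)*(∑ b, x b^2) + (2*p - (2*p)*(2*p))*x a^2)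
        + ((s:ℝ)^2 - s)*((2*p)*(2*p)*(x a)^2) := by
    intro a
    have hbb : ∀ i i' : Fin s, ∫ ω, (∑ b, ∑ b',
        x b * x b' * (Φ ω i a * Φ ω i b * (Φ ω i' a * Φ ω i' b'))) ∂μ
        = if i = i' then ((2*p)*(2*p)*(∑ b, x b^2) + (2*p - (2*p)*(2*p))*x a^2)
          else (2*p)*(2*p)*(x a)^2 := by
      intro i i'
      rw [integral_finset_sum _ (fun b _ => integrable_finset_sum _ fun b' _ =>
        ((iAtom4 i i' a b b').const_mul _))]
      have hrow : ∀ b : Fin d, ∫ ω, (∑ b',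
          x b * x b' * (Φ ω i a * Φ ω i b * (Φ ω i' a * Φ ω i' b'))) ∂μ
          = ∑ b', x b * x b' *
            (if i = i' then (if b = b' then (if a = b then 2*p else (2*p)*(2*p)) else 0)
              else (if a = b then 2*p else 0) * (if a = b' then 2*p else 0)) := by
        intro b
        rw [integral_finset_sum _ (fun b' _ => ((iAtom4 i i' a b b').const_mul _))]
        exact Finset.sum_congr rfl fun b' _ => by rw [integral_const_mul, hatom4]
      rw [Finset.sum_congr rfl fun b _ => hrow b]
      by_cases h : i = i'
      · subst h
        simp only [if_pos rfl]
        exact hinner1 a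
      · simp only [if_neg h]
        exact hinner2 a
    have h2 : ∀ i : Fin s, ∫ ω, (∑ i', ∑ b, ∑ b',
        x b * x b' * (Φ ω i a * Φ ω i b * (Φ ω i' a * Φ ω i' b'))) ∂μ
        = ∑ i' : Fin s, (if i = i' then ((2*p)*(2*p)*(∑ b, x b^2) + (2*p - (2*p)*(2*p))*x a^2)
            else (2*p)*(2*p)*(x a)^2) := by
      intro i
      rw [integral_finset_sum _ (fun i' _ => integrable_finset_sum _ fun b _ =>
        integrable_finset_sum _ fun b' _ => ((iAtom4 i i' a b b').const_mul _))]
      exact Finset.sum_congr rfl fun i' _ => hbb i i'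
    rw [integral_finset_sum _ (fun i _ => integrable_finset_sum _ fun i' _ =>
      integrable_finset_sum _ fun b _ => integrable_finset_sum _ fun b' _ =>
        ((iAtom4 i i' a b b').const_mul _)),
      Finset.sum_congr rfl fun i _ => h2 i, outer]
  -- integrability of L and Q
  have iL : ∀ a : Fin d,
      Integrable (fun ω => ∑ i, ∑ b, x b * (Φ ω i a * Φ ω i b)) μ :=
    fun a => integrable_finset_sum _ fun i _ => integrable_finset_sum _ fun b _ =>
      ((iAtom2 i i a b).const_mul _)
  have iQ : ∀ a : Fin d, Integrable (fun ω => ∑ i, ∑ i', ∑ b, ∑ b',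
      x b * x b' * (Φ ω i a * Φ ω i b * (Φ ω i' a * Φ ω i' b'))) μ :=
    fun a => integrable_finset_sum _ fun i _ => integrable_finset_sum _ fun i' _ =>
      integrable_finset_sum _ fun b _ => integrable_finset_sum _ fun b' _ =>
        ((iAtom4 i i' a b b').const_mul _)
  -- the main computation
  have hmain : ∫ ω, ∑ a, (((1 / (α * r')) • ((Φ ω)ᵀ *ᵥ (Φ ω *ᵥ x))) a - x a)^2 ∂μ
      = ∑ a : Fin d, ((1/(α*r'))^2 *
            ((s:ℝ)*((2*p)*(2*p)*(∑ b, x b^2) + (2*p - (2*p)*(2*p))*x a^2)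
              + ((s:ℝ)^2 - s)*((2*p)*(2*p)*(x a)^2))
          - 2*(1/(α*r'))*x a * ((s:ℝ)*(2*p)*x a) + x a^2) := by
    have iTerm : ∀ a : Fin d, Integrable (fun ω => (1/(α*r'))^2 *
          (∑ i, ∑ i', ∑ b, ∑ b', x b * x b' * (Φ ω i a * Φ ω i b * (Φ ω i' a * Φ ω i' b')))
        - 2*(1/(α*r'))*x a * (∑ i, ∑ b, x b * (Φ ω i a * Φ ω i b)) + x a^2) μ := by
      intro a
      exact (((iQ a).const_mul _).sub ((iL a).const_mul _)).add (integrable_const _)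
    simp only [hpt]
    rw [integral_finset_sum _ (fun a _ => iTerm a)]
    refine Finset.sum_congr rfl fun a _ => ?_
    have iQ' : Integrable (fun ω => (1/(α*r'))^2 *
        (∑ i, ∑ i', ∑ b, ∑ b', x b * x b' * (Φ ω i a * Φ ω i b * (Φ ω i' a * Φ ω i' b')))) μ :=
      (iQ a).const_mul _
    have iL' : Integrable (fun ω => 2*(1/(α*r'))*x a *
        (∑ i, ∑ b, x b * (Φ ω i a * Φ ω i b))) μ := (iL a).const_mul _
    have iA : Integrable (fun ω => (1/(α*r'))^2 *
        (∑ i, ∑ i', ∑ b, ∑ b', x b * x b' * (Φ ω i a * Φ ω i b * (Φ ω i' a * Φ ω i' b')))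
        - 2*(1/(α*r'))*x a * (∑ i, ∑ b, x b * (Φ ω i a * Φ ω i b))) μ := iQ'.sub iL'
    rw [integral_add iA (integrable_const _), integral_sub iQ' iL',
      integral_const_mul, integral_const_mul, hQval a, hLval a, integral_const]
    simp [measure_univ]
  rw [hmain]
  -- sum it up
  have hEeq : (∑ a : Fin d, ((1/(α*r'))^2 *
        ((s:ℝ)*((2*p)*(2*p)*(∑ b, x b^2) + (2*p - (2*p)*(2*p))*x a^2)
          + ((s:ℝ)^2 - s)*((2*p)*(2*p)*(x a)^2))
        - 2*(1/(α*r'))*x a * ((s:ℝ)*(2*p)*x a) + x a^2))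
      = ((d:ℝ)*((1/(α*r'))^2 * ((s:ℝ)*((2*p)*(2*p))))
          + ((1/(α*r'))^2*((s:ℝ)*(2*p - (2*p)*(2*p)) + ((s:ℝ)^2 - s)*((2*p)*(2*p)))
            - 2*(1/(α*r'))*((s:ℝ)*(2*p)) + 1)) * ∑ b, x b^2 := by
    rw [Finset.sum_congr rfl (fun a _ => show ((1/(α*r'))^2 *
        ((s:ℝ)*((2*p)*(2*p)*(∑ b, x b^2) + (2*p - (2*p)*(2*p))*x a^2)
          + ((s:ℝ)^2 - s)*((2*p)*(2*p)*(x a)^2))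
        - 2*(1/(α*r'))*x a * ((s:ℝ)*(2*p)*x a) + x a^2)
        = ((1/(α*r'))^2 * ((s:ℝ)*((2*p)*(2*p)))) * (∑ b, x b^2)
          + ((1/(α*r'))^2*((s:ℝ)*(2*p - (2*p)*(2*p)) + ((s:ℝ)^2 - s)*((2*p)*(2*p)))
            - 2*(1/(α*r'))*((s:ℝ)*(2*p)) + 1) * x a^2 from by ring),
      Finset.sum_add_distrib, Finset.sum_const, Finset.card_univ, Fintype.card_fin,
      nsmul_eq_mul, ← Finset.mul_sum]
    ring
  rw [hEeq]
  -- coefficient inequality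
  have hcoef : ((d:ℝ)*((1/(α*r'))^2 * ((s:ℝ)*((2*p)*(2*p))))
      + ((1/(α*r'))^2*((s:ℝ)*(2*p - (2*p)*(2*p)) + ((s:ℝ)^2 - s)*((2*p)*(2*p)))
        - 2*(1/(α*r'))*((s:ℝ)*(2*p)) + 1)) ≤ 1 - 1/r' := by
    have hs0 : (s:ℝ) ≠ 0 := ne_of_gt hs'
    have hKval : 4*p^2*(s:ℝ)*(d:ℝ) + 2*p*s - 8*p^2*s + 4*p^2*(s:ℝ)^2 ≤ α^2*r' := by
      have e1 : α^2*r' = α^2*r + α^2 + α := by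
        rw [hr']; field_simp
      have e2 : α^2*r = 4*p^2*(s:ℝ)*(d:ℝ) := by
        rw [hα, hr]; field_simp; ring
      rw [e1, e2, hα]
      nlinarith [mul_pos (mul_pos hp hp) hs']
    have h3 : (1/(α*r'))^2 * (4*p^2*(s:ℝ)*(d:ℝ) + 2*p*s - 8*p^2*s + 4*p^2*(s:ℝ)^2)
        ≤ 1/r' := by
      rw [show (1/(α*r'))^2 * (4*p^2*(s:ℝ)*(d:ℝ) + 2*p*s - 8*p^2*s + 4*p^2*(s:ℝ)^2)
        = (4*p^2*(s:ℝ)*(d:ℝ) + 2*p*s - 8*p^2*s + 4*p^2*(s:ℝ)^2)/((α*r')^2) from by ring,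
        div_le_div_iff₀ (by positivity) hr'0]
      have h := mul_le_mul_of_nonneg_right hKval hr'0.le
      nlinarith [h]
    have h4 : (1/(α*r'))*α = 1/r' := by
      field_simp
    have h6 : ((d:ℝ)*((1/(α*r'))^2 * ((s:ℝ)*((2*p)*(2*p))))
        + ((1/(α*r'))^2*((s:ℝ)*(2*p - (2*p)*(2*p)) + ((s:ℝ)^2 - s)*((2*p)*(2*p)))
          - 2*(1/(α*r'))*((s:ℝ)*(2*p)) + 1))
        = (1/(α*r'))^2 * (4*p^2*(s:ℝ)*(d:ℝ) + 2*p*s - 8*p^2*s + 4*p^2*(s:ℝ)^2)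
          - 2*((1/(α*r'))*α) + 1 := by
      rw [hα]; ring
    rw [h6, h4]
    linarith [h3]
  exact mul_le_mul_of_nonneg_right hcoef hS0
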